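/- arXiv:2209.01691 — 2 statements merged into one kernel-verified Lean document; each statement's English description precedes it below -/
import Mathlib

section
/- Let (Ω, μ) be a probability space, let n ≥ 1, let Y ∈ ℝⁿ be nonzero, let g : Ω → (Fin n → ℝ) satisfy gᵢ = Yᵢ almost surely for each i, and let h : Ω → ℝ be integrable with each product h·gᵢ integrable. Define the data–data kernel matrix K ∈ ℝ^(n×n) by Kᵢⱼ = E[gᵢ gⱼ] and the kernel row vector k ∈ ℝⁿ by kᵢ = E[h gᵢ]. Then: (1) K = Y Yᵀ; (2) k = E[h] · Y; and (3) for every matrix B ∈ ℝ^(n×n) satisfying the four Moore–Penrose equations for K (K B K = K, B K B = B, (K B)ᵀ = K B, (B K)ᵀ = B K), the kernel regression prediction kᵀ B Y equals E[h]. -/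
/-!
Under the posterior the training values `g` are almost surely the constant `Y`, so every
expectation against `g` factors: `K = Y Yᵀ` and `k = E[h] Y`. For the rank-one `K` one has
`K B K = (Yᵀ B Y) K`, hence the single Moore–Penrose equation `K B K = K` forces `Yᵀ B Y = 1`,
and `kᵀ B Y = E[h] · Yᵀ B Y = E[h]`.
-/

open MeasureTheory Matrix

section Integral

variable {Ω : Type*} [MeasurableSpace Ω] {μ : Measure Ω}

theorem integral_eq_of_ae_eq_const [IsProbabilityMeasure μ] {E : Type*} [NormedAddCommGroup E]
    [NormedSpace ℝ E] [CompleteSpace E] {f : Ω → E} {c : E} (hf : ∀ᵐ ω ∂μ, f ω = c) :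
    ∫ ω, f ω ∂μ = c := by
  rw [integral_congr_ae hf, integral_const, probReal_univ, one_smul]

theorem integral_mul_eq_of_ae_eq_const {f h : Ω → ℝ} {c : ℝ} (hf : ∀ᵐ ω ∂μ, f ω = c) :
    ∫ ω, h ω * f ω ∂μ = (∫ ω, h ω ∂μ) * c := by
  rw [← integral_mul_const]
  exact integral_congr_ae (by filter_upwards [hf] with ω hω; rw [hω])

end Integral

namespace Matrix

variable {n R : Type*} [Fintype n] [CommRing R]

theorem vecMulVec_mul_mul_vecMulVec {l m : Type*} (u : l → R) (v w : n → R) (x : m → R)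
    (B : Matrix n n R) : vecMulVec u v * B * vecMulVec w x = (v ⬝ᵥ B *ᵥ w) • vecMulVec u x := by
  rw [Matrix.mul_assoc, mul_vecMulVec, vecMulVec_mul_vecMulVec, vecMulVec_smul]

theorem dotProduct_mulVec_eq_one_of_vecMulVec_mul_mul [NoZeroDivisors R] {Y : n → R}
    (hY : Y ≠ 0) {B : Matrix n n R} (hB : vecMulVec Y Y * B * vecMulVec Y Y = vecMulVec Y Y) :
    Y ⬝ᵥ B *ᵥ Y = 1 := by
  rw [vecMulVec_mul_mul_vecMulVec] at hB
  exact smul_left_injective R (vecMulVec_ne_zero hY hY) (hB.trans (one_smul R _).symm)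

end Matrix

theorem optimal_posterior_kernel_general {Ω : Type*} [MeasurableSpace Ω] (μ : Measure Ω)
    [IsProbabilityMeasure μ]
    (n : ℕ) (Y : Fin n → ℝ) (hY : Y ≠ 0)
    (g : Ω → Fin n → ℝ) (hg : ∀ i, ∀ᵐ ω ∂μ, g ω i = Y i)
    (h : Ω → ℝ)
    (K : Matrix (Fin n) (Fin n) ℝ) (hK : ∀ i j, K i j = ∫ ω, g ω i * g ω j ∂μ)
    (k : Fin n → ℝ) (hk : ∀ i, k i = ∫ ω, h ω * g ω i ∂μ) :
    K = Matrix.vecMulVec Y Y ∧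
    k = (∫ ω, h ω ∂μ) • Y ∧
    ∀ B : Matrix (Fin n) (Fin n) ℝ,
      K * B * K = K → B * K * B = B → (K * B)ᵀ = K * B → (B * K)ᵀ = B * K →
      k ⬝ᵥ B.mulVec Y = ∫ ω, h ω ∂μ := by
  have hKY : K = vecMulVec Y Y := by
    ext i j
    rw [hK, integral_mul_eq_of_ae_eq_const (hg j), integral_eq_of_ae_eq_const (hg i),
      vecMulVec_apply]
  have hkY : k = (∫ ω, h ω ∂μ) • Y := by
    funext i
    rw [hk, integral_mul_eq_of_ae_eq_const (hg i), Pi.smul_apply, smul_eq_mul]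
  refine ⟨hKY, hkY, fun B hKBK _ _ _ => ?_⟩
  rw [hKY] at hKBK
  rw [hkY, smul_dotProduct, dotProduct_mulVec_eq_one_of_vecMulVec_mul_mul hY hKBK, smul_eq_mul,
    mul_one]

/-- With the posterior kernel, the data–data kernel matrix is `Y Yᵀ`, the
kernel row vector is `E[h] • Y`, and the kernel regression prediction (computed via any
Moore–Penrose pseudoinverse) equals the posterior mean `E[h]`. -/
theorem optimal_posterior_kernel {Ω : Type*} [MeasurableSpace Ω] (μ : Measure Ω)
    [IsProbabilityMeasure μ]
    (n : ℕ) (hn : 1 ≤ n) (Y : Fin n → ℝ) (hY : Y ≠ 0)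
    (g : Ω → Fin n → ℝ) (hg : ∀ i, ∀ᵐ ω ∂μ, g ω i = Y i)
    (h : Ω → ℝ) (hh : Integrable h μ)
    (hhg : ∀ i, Integrable (fun ω => h ω * g ω i) μ)
    (K : Matrix (Fin n) (Fin n) ℝ) (hK : ∀ i j, K i j = ∫ ω, g ω i * g ω j ∂μ)
    (k : Fin n → ℝ) (hk : ∀ i, k i = ∫ ω, h ω * g ω i ∂μ) :
    K = Matrix.vecMulVec Y Y ∧
    k = (∫ ω, h ω ∂μ) • Y ∧
    ∀ B : Matrix (Fin n) (Fin n) ℝ,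
      K * B * K = K → B * K * B = B → (K * B)ᵀ = K * B → (B * K)ᵀ = B * K →
      k ⬝ᵥ B.mulVec Y = ∫ ω, h ω ∂μ :=
  optimal_posterior_kernel_general μ n Y hY g hg h K hK k hk
end

section
/- Let (Ω, ℱ, μ) be a probability space, let 𝒢 ⊆ ℱ be a sub-σ-algebra, let n ≥ 1, let g : Ω → (Fin n → ℝ) be 𝒢-measurable with each gᵢ square-integrable, and let h : Ω → ℝ be square-integrable. Then, almost surely: (1) for all i, j, the conditional expectation satisfies E[gᵢ gⱼ | 𝒢] = gᵢ gⱼ, so the conditional data–data kernel matrix equals g gᵀ; (2) for all i, E[h gᵢ | 𝒢] = gᵢ · E[h | 𝒢]; and (3) at almost every ω with g(ω) ≠ 0, the kernel regression prediction with the conditional kernel equals the conditional mean: Σᵢ E[h gᵢ | 𝒢](ω) · gᵢ(ω) / ‖g(ω)‖² = E[h | 𝒢](ω), which is exactly kᵀ(ω) B(ω) g(ω) with B(ω) = ‖g(ω)‖⁻⁴ g(ω) g(ω)ᵀ the Moore–Penrose pseudoinverse of g(ω) g(ω)ᵀ and kᵢ(ω) = E[h gᵢ | 𝒢](ω). -/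
/-! Since `g` is `m`-measurable, it factors out of every conditional expectation ("pull-out"
property), so the conditional kernel is the rank-one matrix `g gᵀ`, the kernel vector is
`g · E[h|m]`, and the regression weight `‖g‖⁻²` cancels the `‖g‖²` produced by `gᵀ g`. -/

open MeasureTheory

theorem sum_mul_div_sum_sq_of_eq_mul {ι : Type*} [Fintype ι] {g k : ι → ℝ} {c : ℝ}
    (hg : g ≠ 0) (hk : ∀ i, k i = g i * c) : (∑ i, k i * g i) / ∑ i, g i ^ 2 = c := by
  have hpos : 0 < ∑ i, g i ^ 2 := by
    obtain ⟨i, hi⟩ := Function.ne_iff.1 hg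
    exact Finset.sum_pos' (fun j _ => sq_nonneg (g j))
      ⟨i, Finset.mem_univ i, sq_pos_of_ne_zero hi⟩
  have hsum : ∑ i, k i * g i = (∑ i, g i ^ 2) * c := by
    rw [Finset.sum_mul]
    exact Finset.sum_congr rfl fun i _ => by rw [hk i]; ring
  rw [hsum, mul_div_cancel_left₀ c hpos.ne']

theorem generalized_optimal_posterior_kernel_general {Ω : Type*} {ℱ : MeasurableSpace Ω}
    (μ : Measure Ω) [IsProbabilityMeasure μ]
    (m : MeasurableSpace Ω) (hm : m ≤ ℱ)
    (n : ℕ)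
    (g : Ω → Fin n → ℝ) (hgm : ∀ i, StronglyMeasurable[m] (fun ω => g ω i))
    (hg2 : ∀ i, MemLp (fun ω => g ω i) 2 μ)
    (h : Ω → ℝ) (hh2 : MemLp h 2 μ) :
    (∀ i j, μ[(fun ω => g ω i * g ω j)|m] =ᵐ[μ] fun ω => g ω i * g ω j) ∧
    (∀ i, μ[(fun ω => h ω * g ω i)|m] =ᵐ[μ] fun ω => g ω i * (μ[h|m]) ω) ∧
    (∀ᵐ ω ∂μ, g ω ≠ 0 →
      (∑ i, (μ[(fun ω' => h ω' * g ω' i)|m]) ω * g ω i) / (∑ i, g ω i ^ 2) =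
        (μ[h|m]) ω) := by
  have kernel_vector : ∀ i, μ[(fun ω => h ω * g ω i)|m] =ᵐ[μ] fun ω => g ω i * (μ[h|m]) ω :=
    fun i => (condExp_mul_of_aestronglyMeasurable_right (hgm i).aestronglyMeasurable
      (hh2.integrable_mul (hg2 i)) (hh2.integrable one_le_two)).trans
      (.of_forall fun ω => mul_comm _ _)
  refine ⟨fun i j => (condExp_of_stronglyMeasurable hm ((hgm i).mul (hgm j))
    ((hg2 i).integrable_mul (hg2 j))).eventuallyEq, kernel_vector, ?_⟩
  filter_upwards [ae_all_iff.2 kernel_vector] with ω hω hne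
  exact sum_mul_div_sum_sq_of_eq_mul hne hω

/-- Generalized optimal posterior kernel. For a sub-σ-algebra `m`, a
`m`-measurable square-integrable vector `g` and square-integrable `h`: the conditional
data–data kernel matrix is `g gᵀ`, the conditional kernel vector is `g • E[h|m]`, and
wherever `g ≠ 0` the kernel regression prediction with the conditional kernel equals the
conditional mean `E[h|m]`. -/
theorem generalized_optimal_posterior_kernel {Ω : Type*} {ℱ : MeasurableSpace Ω}
    (μ : Measure Ω) [IsProbabilityMeasure μ]
    (m : MeasurableSpace Ω) (hm : m ≤ ℱ)
    (n : ℕ) (hn : 1 ≤ n)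
    (g : Ω → Fin n → ℝ) (hgm : ∀ i, StronglyMeasurable[m] (fun ω => g ω i))
    (hg2 : ∀ i, MemLp (fun ω => g ω i) 2 μ)
    (h : Ω → ℝ) (hh2 : MemLp h 2 μ) :
    (∀ i j, μ[(fun ω => g ω i * g ω j)|m] =ᵐ[μ] fun ω => g ω i * g ω j) ∧
    (∀ i, μ[(fun ω => h ω * g ω i)|m] =ᵐ[μ] fun ω => g ω i * (μ[h|m]) ω) ∧
    (∀ᵐ ω ∂μ, g ω ≠ 0 →
      (∑ i, (μ[(fun ω' => h ω' * g ω' i)|m]) ω * g ω i) / (∑ i, g ω i ^ 2) =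
        (μ[h|m]) ω) :=
  generalized_optimal_posterior_kernel_general μ m hm n g hgm hg2 h hh2
end
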